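/- Baseline Shapley does not preserve average strong pairwise monotonicity: the model f(x_1, x_2) = log(1 + 10 x_1 + 9 x_2) on [0, ∞)² is strongly pairwise monotonic with respect to x_1 over x_2, yet at explicand x = (4, 1) with baseline x' = (0, 0) one has (1/4) · BS_1((4,1), (0,0), f) < (1/1) · BS_2((4,1), (0,0), f), where BS_1 = (1/2)[(f(4,0) − f(0,0)) + (f(4,1) − f(0,1))] and BS_2 = (1/2)[(f(0,1) − f(0,0)) + (f(4,1) − f(4,0))]. -/
import Mathlib


/-- The model `f(x₁, x₂) = log(1 + 10x₁ + 9x₂)`. -/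
noncomputable def f (a b : ℝ) : ℝ := Real.log (1 + 10 * a + 9 * b)

/-- Baseline Shapley does not preserve average strong pairwise monotonicity:
`f(x₁, x₂) = log(1 + 10x₁ + 9x₂)` on `[0,∞)²` is strongly pairwise monotonic with respect
to `x₁` over `x₂`, yet at explicand `(4, 1)` with baseline `(0, 0)` one has
`(1/4)·BS₁ < (1/1)·BS₂`, where
`BS₁ = (1/2)[(f(4,0) − f(0,0)) + (f(4,1) − f(0,1))]` and
`BS₂ = (1/2)[(f(0,1) − f(0,0)) + (f(4,1) − f(4,0))]`. -/
theorem bshap_fails_average_strong_pairwise_monotonicity :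
    (∀ a b c : ℝ, 0 ≤ a → 0 ≤ b → 0 < c → f a (b + c) ≤ f (a + c) b) ∧
    (1 / 4 : ℝ) * ((1 / 2) * ((f 4 0 - f 0 0) + (f 4 1 - f 0 1)))
      < (1 / 1 : ℝ) * ((1 / 2) * ((f 0 1 - f 0 0) + (f 4 1 - f 4 0))) := by
  constructor
  · intro a b c ha hb hc
    unfold f
    apply Real.log_le_log (by nlinarith)
    nlinarith
  · unfold f
    norm_num
    have h41 : Real.log (41 : ℝ) = Real.log 41 := rfl
    -- reduce to 5 * log 41 < 3 * log 50 + 5 * log 10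
    have key : (5 : ℝ) * Real.log 41 < 3 * Real.log 50 + 5 * Real.log 10 := by
      have h1 : (5 : ℝ) * Real.log 41 = Real.log (41 ^ 5) := by
        rw [Real.log_pow]; push_cast; ring
      have h2 : (3 : ℝ) * Real.log 50 + 5 * Real.log 10
          = Real.log ((50 : ℝ) ^ 3 * 10 ^ 5) := by
        rw [Real.log_mul (by norm_num) (by norm_num), Real.log_pow, Real.log_pow]
        push_cast; ring
      rw [h1, h2]
      apply Real.log_lt_log (by positivity)
      norm_num
    nlinarith [key]
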